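/- Assume S satisfies identity (1). Let C ⊆ B, let e₁, e₂ ∈ E(S) ∪ {□}, let t₁ ∈ β(P^C[e₁]) be left saturated and let t₂ ∈ β(S^C[e₂]) be right saturated. Then there exists r ∈ M such that t₁·β(w)·t₂ = r for every w ∈ T^C[e₁,e₂]. -/

import Mathlib

/-- The type of letters of the alphabet `B = (E(S) ∪ {□}) × M × (E(S) ∪ {□})`:
a guard is an element of `Option M`, where `none` plays the role of `□`. -/
abbrev BLetter (M : Type*) := Option M × M × Option M

/-- A guard is valid if it is `□` or an idempotent element of `S`. -/
def GuardOK {M : Type*} [Monoid M] (S : Set M) (g : Option M) : Prop :=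
  ∀ m : M, g = some m → m ∈ S ∧ m * m = m

/-- The set of letters of the alphabet `B`. -/
def Bset {M : Type*} [Monoid M] (S : Set M) : Set (BLetter M) :=
  {b | GuardOK S b.1 ∧ GuardOK S b.2.2}

/-- The value `β(b)` of a letter `b = (e,s,f)`: it is `e·s·f` where a `□` guard
is interpreted as `1`. This encodes the four cases `β((e,s,f)) = e·s·f`,
`β((□,s,f)) = s·f`, `β((e,s,□)) = e·s` and `β((□,s,□)) = s`. -/
def letterVal {M : Type*} [Monoid M] (b : BLetter M) : M :=
  b.1.getD 1 * b.2.1 * b.2.2.getD 1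

/-- The morphism `β : B* → M`. -/
def betaWord {M : Type*} [Monoid M] (u : List (BLetter M)) : M :=
  (u.map letterVal).prod

/-- A word `(e₀,s₀,f₀)⋯(e_n,s_n,f_n) ∈ B*` is pseudo well-formed when
`f_i = e_{i+1} ∈ E(S)` for every `i < n` (the empty word and one-letter words
are pseudo well-formed). -/
def PseudoWF {M : Type*} [Monoid M] (S : Set M) : List (BLetter M) → Prop
  | [] => True
  | [_] => True
  | b₁ :: b₂ :: rest =>
      (∃ g : M, g ∈ S ∧ g * g = g ∧ b₁.2.2 = some g ∧ b₂.1 = some g) ∧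
      PseudoWF S (b₂ :: rest)

/-- The left guard `e₀` of a word `(e₀,s₀,f₀)⋯(e_n,s_n,f_n)` (junk on `ε`). -/
def leftGuard {M : Type*} [Monoid M] (u : List (BLetter M)) : Option M :=
  (u.headD (none, 1, none)).1

/-- The right guard `f_n` of a word `(e₀,s₀,f₀)⋯(e_n,s_n,f_n)` (junk on `ε`). -/
def rightGuard {M : Type*} [Monoid M] (u : List (BLetter M)) : Option M :=
  (u.getLastD (none, 1, none)).2.2

/-- A word of `B*` is well-formed if it is nonempty, pseudo well-formed and both
its guards are `□`. -/
def WellFormed {M : Type*} [Monoid M] (S : Set M) (u : List (BLetter M)) : Prop :=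
  u ≠ [] ∧ PseudoWF S u ∧ leftGuard u = none ∧ rightGuard u = none

/-- `T^C[e,f]`: nonempty pseudo well-formed words over `C` with left guard `e` and
right guard `f`, together with `ε` when `e = f ∈ E(S)`. -/
def Tset {M : Type*} [Monoid M] (S : Set M) (C : Set (BLetter M)) (e f : Option M) :
    Set (List (BLetter M)) :=
  {u | (u ≠ [] ∧ (∀ b ∈ u, b ∈ C) ∧ PseudoWF S u ∧ leftGuard u = e ∧ rightGuard u = f)
    ∨ (u = [] ∧ e = f ∧ ∃ g : M, g ∈ S ∧ g * g = g ∧ e = some g)}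

/-- `P^C[e]`: `{ε}` if `e = □`, and otherwise `ε` together with all nonempty pseudo
well-formed words over `C` with right guard `e`. -/
def Pset {M : Type*} [Monoid M] (S : Set M) (C : Set (BLetter M)) (e : Option M) :
    Set (List (BLetter M)) :=
  {u | u = [] ∨ (e ≠ none ∧ u ≠ [] ∧ (∀ b ∈ u, b ∈ C) ∧ PseudoWF S u ∧ rightGuard u = e)}

/-- `S^C[f]`: `{ε}` if `f = □`, and otherwise `ε` together with all nonempty pseudo
well-formed words over `C` with left guard `f`. -/
def Sset {M : Type*} [Monoid M] (S : Set M) (C : Set (BLetter M)) (f : Option M) :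
    Set (List (BLetter M)) :=
  {u | u = [] ∨ (f ≠ none ∧ u ≠ [] ∧ (∀ b ∈ u, b ∈ C) ∧ PseudoWF S u ∧ leftGuard u = f)}

/-- `t₁` is left saturated (w.r.t. `C` and `e₁`) when for every `f ∈ E(S) ∪ {□}`
and every `u ∈ T^C[e₁,f]`, `t₁ ∈ t₁·β(u)·M`. -/
def LeftSaturated {M : Type*} [Monoid M] (S : Set M) (C : Set (BLetter M))
    (e₁ : Option M) (t₁ : M) : Prop :=
  ∀ f : Option M, GuardOK S f → ∀ u ∈ Tset S C e₁ f,
    ∃ z : M, t₁ = t₁ * betaWord u * z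

/-- `t₂` is right saturated (w.r.t. `C` and `e₂`) when for every `f ∈ E(S) ∪ {□}`
and every `u ∈ T^C[f,e₂]`, `t₂ ∈ M·β(u)·t₂`. -/
def RightSaturated {M : Type*} [Monoid M] (S : Set M) (C : Set (BLetter M))
    (e₂ : Option M) (t₂ : M) : Prop :=
  ∀ f : Option M, GuardOK S f → ∀ u ∈ Tset S C f e₂,
    ∃ z : M, t₂ = z * betaWord u * t₂

/-!
For `w, w₀ ∈ T^C[e₁,e₂]` put `a = t₁·β(w)·t₂` and `b = t₁·β(w₀)·t₂`. Prefixing `w₀` with the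
word of `P^C[e₁]` evaluating to `t₁` gives a word of some `T^C[f,e₂]`, so right saturation puts
`t₂`, hence `a`, in `M·b`; symmetrically, left saturation puts `t₁`, hence `b`, in `a·M`.
Identity (1) with `e = s = mⁿ` idempotent and `t = m` gives `mⁿ·m = mⁿ`, so `M` is aperiodic,
and in an aperiodic monoid `b ∈ a·M` and `a ∈ M·b` force `a = b`.
-/

def IsAperiodic (M : Type*) [Monoid M] : Prop :=
  ∀ m : M, ∃ n : ℕ, m ^ (n + 1) = m ^ n

section Aperiodic

variable {M : Type*} [Monoid M]

theorem IsAperiodic.eq_of_eq_mul_of_eq_mul (hM : IsAperiodic M) {a b u v : M}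
    (hb : b = a * v) (ha : a = u * b) : a = b := by
  have hiter : ∀ n : ℕ, a = u ^ n * a * v ^ n := by
    intro n
    induction n with
    | zero => simp
    | succ n ih =>
      calc a = u * (a * v) := by rw [← hb, ← ha]
        _ = u * (u ^ n * a * v ^ n) * v := by rw [← mul_assoc, ← ih]
        _ = u ^ (n + 1) * a * v ^ (n + 1) := by
              rw [pow_succ' u n, pow_succ v n]; simp only [mul_assoc]
  obtain ⟨n, hn⟩ := hM u
  calc a = u ^ (n + 1) * a * v ^ (n + 1) := hiter (n + 1)
    _ = u ^ n * a * v ^ n * v := by rw [hn, pow_succ, ← mul_assoc]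
    _ = b := by rw [← hiter n, hb]

theorem exists_isIdempotentElem_pow [Finite M] (m : M) :
    ∃ n : ℕ, n ≠ 0 ∧ IsIdempotentElem (m ^ n) := by
  obtain ⟨i, j, hij, hpow⟩ := Finite.exists_ne_map_eq_of_infinite (m ^ · : ℕ → M)
  wlog hlt : i < j generalizing i j
  · exact this j i hij.symm hpow.symm (by omega)
  obtain ⟨p, rfl⟩ := Nat.exists_eq_add_of_lt hlt
  have hperiod : ∀ k c : ℕ, m ^ (i + c + k * (p + 1)) = m ^ (i + c) := by
    intro k c
    induction k with
    | zero => simp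
    | succ k ih =>
      calc m ^ (i + c + (k + 1) * (p + 1)) = m ^ (i + p + 1) * m ^ (c + k * (p + 1)) := by
            rw [← pow_add]; ring_nf
        _ = m ^ (i + c) := by rw [← hpow, ← pow_add, ← add_assoc, ih]
  refine ⟨(i + 1) * (p + 1), by positivity, ?_⟩
  rw [IsIdempotentElem, ← pow_add]
  convert hperiod (i + 1) (i * p + p + 1) using 2 <;> ring

end Aperiodic

def IdentityOne {M : Type*} [Monoid M] (S : Set M) : Prop :=
  ∀ s ∈ S, ∀ t ∈ S, ∀ e ∈ S, e * e = e → ∀ n : ℕ, 1 ≤ n →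
    (e * s * e * t * e) ^ n * (e * s * e * t * e) ^ n = (e * s * e * t * e) ^ n →
    (e * s * e * t * e) ^ n * t * (e * s * e * t * e) ^ n = (e * s * e * t * e) ^ n

namespace IdentityOne

variable {M : Type*} [Monoid M] [Finite M] {S : Set M}

theorem exists_pow_succ_eq_pow (hS : IdentityOne S) (hmul : ∀ a ∈ S, ∀ b ∈ S, a * b ∈ S)
    {m : M} (hm : m ∈ S) : ∃ n : ℕ, m ^ (n + 1) = m ^ n := by
  obtain ⟨n, hn, he⟩ := exists_isIdempotentElem_pow m
  have hpow_mem : ∀ k : ℕ, m ^ (k + 1) ∈ S := fun k => by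
    induction k with
    | zero => simpa using hm
    | succ k ih => rw [pow_succ]; exact hmul _ ih _ hm
  have he_mem : m ^ n ∈ S := by
    obtain ⟨k, rfl⟩ := Nat.exists_eq_succ_of_ne_zero hn
    exact hpow_mem k
  have hcomm : m ^ n * m * m ^ n = m ^ n * m := by
    rw [mul_assoc, ← pow_succ', pow_succ, ← mul_assoc, he.eq]
  have hx : m ^ n * m ^ n * m ^ n * m * m ^ n = m ^ n * m := by
    rw [he.eq, he.eq, hcomm]
  have hxn : (m ^ n * m) ^ n = m ^ n := by
    rw [← pow_succ, ← pow_mul, mul_comm, pow_mul, he.pow_succ_eq]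
  have key := hS (m ^ n) he_mem m hm (m ^ n) he_mem he.eq n (Nat.one_le_iff_ne_zero.2 hn)
  rw [hx, hxn] at key
  exact ⟨n, by rw [pow_succ, ← hcomm, key he.eq]⟩

theorem isAperiodic (hS : IdentityOne S) (hmul : ∀ a ∈ S, ∀ b ∈ S, a * b ∈ S)
    (hcover : ∀ m : M, m ∈ S ∨ m = 1) : IsAperiodic M := by
  intro m
  rcases hcover m with hm | rfl
  · exact hS.exists_pow_succ_eq_pow hmul hm
  · exact ⟨0, by simp⟩

end IdentityOne

section Words

variable {M : Type*} [Monoid M] {S : Set M} {C : Set (BLetter M)}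

def GuardsMatch (S : Set M) (b₁ b₂ : BLetter M) : Prop :=
  ∃ g : M, g ∈ S ∧ g * g = g ∧ b₁.2.2 = some g ∧ b₂.1 = some g

theorem pseudoWF_iff_isChain : ∀ {u : List (BLetter M)},
    PseudoWF S u ↔ u.IsChain (GuardsMatch S)
  | [] => by simp [PseudoWF]
  | [_] => by simp [PseudoWF]
  | _ :: _ :: _ => by rw [PseudoWF, List.isChain_cons_cons, pseudoWF_iff_isChain]; rfl

theorem betaWord_append (u v : List (BLetter M)) :
    betaWord (u ++ v) = betaWord u * betaWord v := by
  simp [betaWord]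

theorem leftGuard_append {u : List (BLetter M)} (hu : u ≠ []) (v : List (BLetter M)) :
    leftGuard (u ++ v) = leftGuard u := by
  obtain ⟨b, u, rfl⟩ := List.exists_cons_of_ne_nil hu
  rfl

theorem rightGuard_append (u : List (BLetter M)) {v : List (BLetter M)} (hv : v ≠ []) :
    rightGuard (u ++ v) = rightGuard v := by
  obtain ⟨v, b, rfl⟩ := (List.eq_nil_or_concat v).resolve_left hv
  simp only [rightGuard, List.concat_eq_append, ← List.append_assoc, List.getLastD_concat]

theorem pseudoWF_append {u v : List (BLetter M)} {g : M} (hg : g ∈ S) (hgg : g * g = g)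
    (hu : PseudoWF S u) (hv : PseudoWF S v) (hur : rightGuard u = some g)
    (hvl : leftGuard v = some g) : PseudoWF S (u ++ v) := by
  rw [pseudoWF_iff_isChain] at *
  refine hu.append hv fun x hx y hy => ⟨g, hg, hgg, ?_, ?_⟩
  · simp_all [rightGuard]
  · simp_all [leftGuard]

theorem append_mem_Tset {u v : List (BLetter M)} {e f : Option M} {g : M} (hg : g ∈ S)
    (hgg : g * g = g) (hu : u ∈ Tset S C e (some g)) (hv : v ∈ Tset S C (some g) f) :
    u ++ v ∈ Tset S C e f := by
  rcases hu with ⟨hune, huC, huWF, hul, hur⟩ | ⟨rfl, rfl, -⟩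
  · rcases hv with ⟨hvne, hvC, hvWF, hvl, hvr⟩ | ⟨rfl, rfl, -⟩
    · refine Or.inl ⟨by simp [hune], ?_, pseudoWF_append hg hgg huWF hvWF hur hvl,
        by rw [leftGuard_append hune, hul], by rw [rightGuard_append u hvne, hvr]⟩
      simp only [List.mem_append]
      rintro b (hb | hb)
      exacts [huC b hb, hvC b hb]
    · rw [List.append_nil]
      exact Or.inl ⟨hune, huC, huWF, hul, hur⟩
  · exact hv

theorem exists_append_mem_Tset_of_mem_Pset (hC : C ⊆ Bset S) {e₁ e₂ : Option M}
    (he₁ : GuardOK S e₁) {p w : List (BLetter M)} (hp : p ∈ Pset S C e₁)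
    (hw : w ∈ Tset S C e₁ e₂) : ∃ f, GuardOK S f ∧ p ++ w ∈ Tset S C f e₂ := by
  rcases hp with rfl | ⟨hne, hpne, hpC, hpWF, hpr⟩
  · exact ⟨e₁, he₁, hw⟩
  obtain ⟨g, rfl⟩ := Option.ne_none_iff_exists'.1 hne
  obtain ⟨hg, hgg⟩ := he₁ g rfl
  obtain ⟨b, p, rfl⟩ := List.exists_cons_of_ne_nil hpne
  exact ⟨b.1, (hC (hpC b List.mem_cons_self)).1,
    append_mem_Tset hg hgg (Or.inl ⟨hpne, hpC, hpWF, rfl, hpr⟩) hw⟩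

theorem exists_append_mem_Tset_of_mem_Sset (hC : C ⊆ Bset S) {e₁ e₂ : Option M}
    (he₂ : GuardOK S e₂) {q w : List (BLetter M)} (hq : q ∈ Sset S C e₂)
    (hw : w ∈ Tset S C e₁ e₂) : ∃ f, GuardOK S f ∧ w ++ q ∈ Tset S C e₁ f := by
  rcases hq with rfl | ⟨hne, hqne, hqC, hqWF, hql⟩
  · exact ⟨e₂, he₂, by rwa [List.append_nil]⟩
  obtain ⟨g, rfl⟩ := Option.ne_none_iff_exists'.1 hne
  obtain ⟨hg, hgg⟩ := he₂ g rfl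
  obtain ⟨q, b, rfl⟩ := (List.eq_nil_or_concat q).resolve_left hqne
  exact ⟨b.2.2, (hC (hqC b (by simp))).2,
    append_mem_Tset hg hgg hw (Or.inl ⟨hqne, hqC, hqWF, hql, by simp [rightGuard]⟩)⟩

end Words

theorem stmt_12_general {A M : Type*} [Fintype M] [Monoid M]
    (α : List A → M) (hα1 : α [] = 1)
    (hαmul : ∀ u v : List A, α (u ++ v) = α u * α v)
    (hαsurj : Function.Surjective α)
    (S : Set M) (hS : S = {m : M | ∃ u : List A, u ≠ [] ∧ α u = m})
    (hId : ∀ s ∈ S, ∀ t ∈ S, ∀ e ∈ S, e * e = e → ∀ n : ℕ, 1 ≤ n →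
      (e * s * e * t * e) ^ n * (e * s * e * t * e) ^ n = (e * s * e * t * e) ^ n →
      (e * s * e * t * e) ^ n * t * (e * s * e * t * e) ^ n = (e * s * e * t * e) ^ n)
    (C : Set (BLetter M)) (hC : C ⊆ Bset S)
    (e₁ e₂ : Option M) (he₁ : GuardOK S e₁) (he₂ : GuardOK S e₂)
    (t₁ : M) (ht₁ : ∃ p ∈ Pset S C e₁, betaWord p = t₁)
    (ht₁sat : LeftSaturated S C e₁ t₁)
    (t₂ : M) (ht₂ : ∃ p ∈ Sset S C e₂, betaWord p = t₂)
    (ht₂sat : RightSaturated S C e₂ t₂) :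
    ∃ r : M, ∀ w ∈ Tset S C e₁ e₂, t₁ * betaWord w * t₂ = r := by
  have hmul : ∀ a ∈ S, ∀ b ∈ S, a * b ∈ S := by
    subst hS
    rintro _ ⟨u, hu, rfl⟩ _ ⟨v, -, rfl⟩
    exact ⟨u ++ v, by simp [hu], hαmul u v⟩
  have hcover : ∀ m : M, m ∈ S ∨ m = 1 := by
    intro m
    obtain ⟨u | ⟨a, u⟩, rfl⟩ := hαsurj m
    · exact Or.inr hα1
    · exact Or.inl (hS ▸ ⟨a :: u, List.cons_ne_nil a u, rfl⟩)
  have hM : IsAperiodic M := IdentityOne.isAperiodic hId hmul hcover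
  obtain ⟨p, hp, rfl⟩ := ht₁
  obtain ⟨q, hq, rfl⟩ := ht₂
  rcases Set.eq_empty_or_nonempty (Tset S C e₁ e₂) with hT | ⟨w₀, hw₀⟩
  · exact ⟨1, by simp [hT]⟩
  refine ⟨betaWord p * betaWord w₀ * betaWord q, fun w hw => ?_⟩
  obtain ⟨f, hf, hpw₀⟩ := exists_append_mem_Tset_of_mem_Pset hC he₁ hp hw₀
  obtain ⟨z, hz⟩ := ht₂sat f hf _ hpw₀
  obtain ⟨f', hf', hwq⟩ := exists_append_mem_Tset_of_mem_Sset hC he₂ hq hw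
  obtain ⟨z', hz'⟩ := ht₁sat f' hf' _ hwq
  rw [betaWord_append] at hz hz'
  refine hM.eq_of_eq_mul_of_eq_mul (u := betaWord p * betaWord w * z)
    (v := z' * betaWord w₀ * betaWord q) ?_ ?_
  · nth_rw 1 [hz']
    simp only [mul_assoc]
  · nth_rw 1 [hz]
    simp only [mul_assoc]

/-- Assume `S` satisfies identity (1). Let `C ⊆ B`, `e₁, e₂ ∈ E(S) ∪ {□}`, let
`t₁ ∈ β(P^C[e₁])` be left saturated and `t₂ ∈ β(S^C[e₂])` be right saturated.
Then there exists `r ∈ M` such that `t₁·β(w)·t₂ = r` for every `w ∈ T^C[e₁,e₂]`. -/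
theorem stmt_12 {A M : Type*} [Fintype A] [Fintype M] [Monoid M]
    (α : List A → M) (hα1 : α [] = 1)
    (hαmul : ∀ u v : List A, α (u ++ v) = α u * α v)
    (hαsurj : Function.Surjective α)
    (S : Set M) (hS : S = {m : M | ∃ u : List A, u ≠ [] ∧ α u = m})
    (hId : ∀ s ∈ S, ∀ t ∈ S, ∀ e ∈ S, e * e = e → ∀ n : ℕ, 1 ≤ n →
      (e * s * e * t * e) ^ n * (e * s * e * t * e) ^ n = (e * s * e * t * e) ^ n →
      (e * s * e * t * e) ^ n * t * (e * s * e * t * e) ^ n = (e * s * e * t * e) ^ n)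
    (C : Set (BLetter M)) (hC : C ⊆ Bset S)
    (e₁ e₂ : Option M) (he₁ : GuardOK S e₁) (he₂ : GuardOK S e₂)
    (t₁ : M) (ht₁ : ∃ p ∈ Pset S C e₁, betaWord p = t₁)
    (ht₁sat : LeftSaturated S C e₁ t₁)
    (t₂ : M) (ht₂ : ∃ p ∈ Sset S C e₂, betaWord p = t₂)
    (ht₂sat : RightSaturated S C e₂ t₂) :
    ∃ r : M, ∀ w ∈ Tset S C e₁ e₂, t₁ * betaWord w * t₂ = r :=
  stmt_12_general α hα1 hαmul hαsurj S hS hId C hC e₁ e₂ he₁ he₂ t₁ ht₁ ht₁sat t₂ ht₂ ht₂sat
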